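/- Let λ, μ, α, c > 0, and let Γ(s, x) := ∫_x^∞ t^{s−1} e^{−t} dt denote the upper incomplete gamma function and Γ(s) = Γ(s, 0). Define f_B : (0, c] → ℝ by f_B(x) = α^{λ/μ} x^{λ/μ − 1} e^{−αx} / (Γ(λ/μ) − Γ(λ/μ, αc)). Then f_B is non-negative, ∫_0^c f_B(x) dx = 1, and x · f_B(x) = (λ/μ) · ∫_0^x e^{−α(x−y)} f_B(y) dy for all x ∈ (0, c]. -/

import Mathlib

open MeasureTheory Filter Real

/-- The upper incomplete gamma function `Γ(s, x) = ∫_x^∞ t^{s−1} e^{−t} dt`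
(so `Γ(s) = Γ(s, 0)`). -/
noncomputable def upperGamma (s x : ℝ) : ℝ :=
  ∫ t in Set.Ioi x, t ^ (s - 1) * Real.exp (-t)

/-- The Gamma(λ/μ, α) density truncated and renormalized to `(0, c]`:
`f_B(x) = α^{λ/μ} x^{λ/μ−1} e^{−αx} / (Γ(λ/μ) − Γ(λ/μ, αc))`. -/
noncomputable def truncatedGammaDensity (lam mu α c : ℝ) (x : ℝ) : ℝ :=
  α ^ (lam / mu) * x ^ (lam / mu - 1) * Real.exp (-α * x)
    / (upperGamma (lam / mu) 0 - upperGamma (lam / mu) (α * c))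

/-!
With `s = λ/μ`, `f_B` is a constant multiple of `y ↦ y^{s−1} e^{−αy}`. In the integral equation
the factor `e^{−α(x−y)}` cancels `e^{−αy}`, leaving `∫_0^x y^{s−1} dy = x^s / s`. The
substitution `t = αx` turns `∫_0^c α^s x^{s−1} e^{−αx} dx` into the lower incomplete gamma
function `Γ(s) − Γ(s, αc)`, which is the normalizing constant and is positive.
-/

lemma integrableOn_rpow_mul_exp_neg_Ioi {s : ℝ} (hs : 0 < s) :
    IntegrableOn (fun t : ℝ => t ^ (s - 1) * exp (-t)) (Set.Ioi 0) :=
  (GammaIntegral_convergent hs).congr_fun (fun _ _ => mul_comm _ _) measurableSet_Ioi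

lemma upperGamma_zero_sub {s b : ℝ} (hs : 0 < s) (hb : 0 ≤ b) :
    upperGamma s 0 - upperGamma s b = ∫ t in (0 : ℝ)..b, t ^ (s - 1) * exp (-t) := by
  have hint := integrableOn_rpow_mul_exp_neg_Ioi hs
  have hsplit : upperGamma s 0
      = (∫ t in Set.Ioc (0 : ℝ) b, t ^ (s - 1) * exp (-t)) + upperGamma s b := by
    rw [upperGamma, upperGamma, ← setIntegral_union (Set.Ioc_disjoint_Ioi le_rfl)
      measurableSet_Ioi (hint.mono_set Set.Ioc_subset_Ioi_self)
      (hint.mono_set (Set.Ioi_subset_Ioi hb)), Set.Ioc_union_Ioi_eq_Ioi hb]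
  rw [intervalIntegral.integral_of_le hb, hsplit, add_sub_cancel_right]

lemma upperGamma_zero_sub_pos {s b : ℝ} (hs : 0 < s) (hb : 0 < b) :
    0 < upperGamma s 0 - upperGamma s b := by
  rw [upperGamma_zero_sub hs hb.le]
  refine intervalIntegral.intervalIntegral_pos_of_pos_on ?_
    (fun t ht => mul_pos (rpow_pos_of_pos ht.1 _) (exp_pos _)) hb
  rw [intervalIntegrable_iff_integrableOn_Ioc_of_le hb.le]
  exact (integrableOn_rpow_mul_exp_neg_Ioi hs).mono_set Set.Ioc_subset_Ioi_self

lemma rpow_mul_integral_rpow_mul_exp_neg_mul {s α c : ℝ} (hα : 0 < α) (hc : 0 ≤ c) :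
    α ^ s * ∫ x in (0 : ℝ)..c, x ^ (s - 1) * exp (-α * x)
      = ∫ t in (0 : ℝ)..α * c, t ^ (s - 1) * exp (-t) := by
  have hscale : ∀ x ∈ Set.uIcc 0 c, α ^ s * (x ^ (s - 1) * exp (-α * x))
      = α * ((α * x) ^ (s - 1) * exp (-(α * x))) := by
    intro x hx
    rw [Set.uIcc_of_le hc] at hx
    rw [mul_rpow hα.le hx.1, rpow_sub_one hα.ne', neg_mul]
    field_simp
  rw [← intervalIntegral.integral_const_mul, intervalIntegral.integral_congr hscale,
    intervalIntegral.integral_const_mul,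
    intervalIntegral.integral_comp_mul_left (fun t => t ^ (s - 1) * exp (-t)) hα.ne',
    mul_zero, smul_eq_mul, mul_inv_cancel_left₀ hα.ne']

lemma mul_rpow_mul_exp_eq_integral {s α x : ℝ} (hs : 0 < s) (hx : 0 ≤ x) :
    x * (x ^ (s - 1) * exp (-α * x))
      = s * ∫ y in (0 : ℝ)..x, exp (-α * (x - y)) * (y ^ (s - 1) * exp (-α * y)) := by
  have hexp : ∀ y, exp (-α * (x - y)) * (y ^ (s - 1) * exp (-α * y))
      = exp (-α * x) * y ^ (s - 1) := by
    intro y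
    rw [mul_left_comm, ← exp_add]
    ring_nf
  have hpow : ∫ y in (0 : ℝ)..x, y ^ (s - 1) = x ^ s / s := by
    rw [integral_rpow (Or.inl (by linarith)), sub_add_cancel, zero_rpow hs.ne', sub_zero]
  have hxpow : x * x ^ (s - 1) = x ^ s := by
    rw [mul_comm, ← rpow_add_one' hx (by simp [hs.ne']), sub_add_cancel]
  simp only [hexp, intervalIntegral.integral_const_mul, hpow]
  rw [← hxpow]
  field_simp

lemma truncatedGammaDensity_eq (lam mu α c x : ℝ) :
    truncatedGammaDensity lam mu α c x
      = α ^ (lam / mu) / (upperGamma (lam / mu) 0 - upperGamma (lam / mu) (α * c))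
        * (x ^ (lam / mu - 1) * exp (-α * x)) := by
  rw [truncatedGammaDensity]
  ring

/-- The truncated gamma density is a probability density on `(0, c]` and satisfies the
stationary integral equation `x f_B(x) = (λ/μ) ∫_0^x e^{−α(x−y)} f_B(y) dy` of the
finite-capacity (blocking) storage process with Poisson(λ) arrivals, proportional release
rate `μ`, exponential(α) marks and capacity `c`. -/
theorem finite_storage_density_closed_form
    (lam mu α c : ℝ) (hlam : 0 < lam) (hmu : 0 < mu) (hα : 0 < α) (hc : 0 < c) :
    (∀ x : ℝ, 0 < x → x ≤ c → 0 ≤ truncatedGammaDensity lam mu α c x)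
    ∧ (∫ x in Set.Ioc (0 : ℝ) c, truncatedGammaDensity lam mu α c x) = 1
    ∧ (∀ x : ℝ, 0 < x → x ≤ c →
        x * truncatedGammaDensity lam mu α c x
          = (lam / mu)
            * ∫ y in (0 : ℝ)..x,
                Real.exp (-α * (x - y)) * truncatedGammaDensity lam mu α c y) := by
  simp only [truncatedGammaDensity_eq]
  have hs : 0 < lam / mu := div_pos hlam hmu
  have hZ := upperGamma_zero_sub_pos hs (mul_pos hα hc)
  refine ⟨fun x hx _ => by positivity, ?_, fun x hx _ => ?_⟩
  · rw [← intervalIntegral.integral_of_le hc.le, intervalIntegral.integral_const_mul,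
      div_mul_eq_mul_div, rpow_mul_integral_rpow_mul_exp_neg_mul hα hc.le,
      ← upperGamma_zero_sub hs (mul_pos hα hc).le, div_self hZ.ne']
  · set K := α ^ (lam / mu) / (upperGamma (lam / mu) 0 - upperGamma (lam / mu) (α * c))
    have hmove : ∀ y, exp (-α * (x - y)) * (K * (y ^ (lam / mu - 1) * exp (-α * y)))
        = K * (exp (-α * (x - y)) * (y ^ (lam / mu - 1) * exp (-α * y))) :=
      fun _ => mul_left_comm _ _ _
    simp only [hmove, intervalIntegral.integral_const_mul]
    rw [mul_left_comm, mul_rpow_mul_exp_eq_integral hs hx.le, mul_left_comm]
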